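/- For all N ≥ 2, all k ∈ {1,…,N−1} and all p ∈ (1/2,1): (a) for every ζ ∈ Ω_{N,k}, (L_{N,k} f^{(0)}_{N,k})(ζ) = −ϱ·f^{(0)}_{N,k}(ζ) − (√(pq)/(λ−1))·[λ^{ζ(N−1)/2} + λ^{ζ(1)/2} − a_{N,k}(N−1) − a_{N,k}(1)]; (b) consequently, for all ζ ≤ ζ' in Ω_{N,k}, (L_{N,k} f^{(0)}_{N,k})(ζ') − (L_{N,k} f^{(0)}_{N,k})(ζ) ≤ −ϱ·(f^{(0)}_{N,k}(ζ') − f^{(0)}_{N,k}(ζ)). -/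

import Mathlib

open Filter
open scoped Classical BigOperators Topology

namespace Wasep

/-- Particle configurations on a segment of length `N`
(site `x` of the paper, `x ∈ {1,…,N}`, is index `x-1 : Fin N`). -/
abbrev Conf (N : ℕ) := Fin N → Bool

/-- Number of particles of a configuration. -/
def numParticles {N : ℕ} (ξ : Conf N) : ℕ :=
  (Finset.univ.filter fun x => ξ x = true).card

/-- The left site of the bond `y` (the paper's site `y`, for `y ∈ {1,…,N-1}`). -/
def siteA {N : ℕ} (y : Fin (N - 1)) : Fin N := ⟨y.1, by have := y.isLt; omega⟩

/-- The right site of the bond `y` (the paper's site `y+1`, for `y ∈ {1,…,N-1}`). -/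
def siteB {N : ℕ} (y : Fin (N - 1)) : Fin N := ⟨y.1 + 1, by have := y.isLt; omega⟩

/-- Jump rate of the bond `y` in configuration `ξ`:
`q·1_{ξ(y)<ξ(y+1)} + p·1_{ξ(y)>ξ(y+1)}` with `q = 1-p`. -/
noncomputable def rate {N : ℕ} (p : ℝ) (ξ : Conf N) (y : Fin (N - 1)) : ℝ :=
  (if ξ (siteA y) = false ∧ ξ (siteB y) = true then 1 - p else 0) +
    (if ξ (siteA y) = true ∧ ξ (siteB y) = false then p else 0)

/-- The configuration `ξ^y`, with the contents of sites `y` and `y+1` swapped. -/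
def swapBond {N : ℕ} (ξ : Conf N) (y : Fin (N - 1)) : Conf N :=
  ξ ∘ Equiv.swap (siteA y) (siteB y)

/-- The ASEP generator acting on functions:
`(L f)(ξ) = Σ_{y=1}^{N-1} (q·1_{ξ(y)<ξ(y+1)} + p·1_{ξ(y)>ξ(y+1)})(f(ξ^y) − f(ξ))`. -/
noncomputable def gen (N : ℕ) (p : ℝ) (f : Conf N → ℝ) (ξ : Conf N) : ℝ :=
  ∑ y : Fin (N - 1), rate p ξ y * (f (swapBond ξ y) - f ξ)

/-- The ASEP generator, as a matrix:  `(L f)(ξ) = Σ_{ξ'} genM(ξ,ξ') f(ξ')`. -/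
noncomputable def genM (N : ℕ) (p : ℝ) : Matrix (Conf N) (Conf N) ℝ := fun ξ ξ' =>
  ∑ y : Fin (N - 1),
    rate p ξ y * ((if ξ' = swapBond ξ y then (1 : ℝ) else 0) - (if ξ' = ξ then (1 : ℝ) else 0))

/-- The semigroup `P_t = exp (t L)`; `Pt N p t ξ ξ'` is the transition
probability from `ξ` to `ξ'` in time `t`. -/
noncomputable def Pt (N : ℕ) (p t : ℝ) (ξ ξ' : Conf N) : ℝ :=
  (NormedSpace.exp (t • LinearMap.toContinuousLinearMap (Matrix.toLin' (genM N p))))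
    (fun η => if η = ξ' then (1 : ℝ) else 0) ξ

/-- `λ = p / q`. -/
noncomputable def lam (p : ℝ) : ℝ := p / (1 - p)

/-- The bias `b = p - q`. -/
def bias (p : ℝ) : ℝ := p - (1 - p)

/-- The increasing list of (1-based) particle positions `ξ_1 < ξ_2 < … < ξ_k`. -/
def particlePos {N : ℕ} (ξ : Conf N) : List ℕ :=
  ((Finset.univ.filter fun x => ξ x = true).sort (· ≤ ·)).map fun x => (x : ℕ) + 1

/-- `A(ξ) = Σ_{i=1}^k (N − k + i − ξ_i)`. -/
def Astat (N k : ℕ) {M : ℕ} (ξ : Conf M) : ℤ :=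
  ∑ i ∈ Finset.range k, ((N : ℤ) - k + (i + 1) - ((particlePos ξ).getD i 0 : ℤ))

/-- The partition function `Z_{N,k} = Σ_{ξ ∈ Ω⁰_{N,k}} λ^{−A(ξ)}`. -/
noncomputable def Zpart (N k : ℕ) (p : ℝ) : ℝ :=
  ∑ ξ ∈ Finset.univ.filter (fun ξ : Conf N => numParticles ξ = k), lam p ^ (-Astat N k ξ)

/-- The invariant measure `π_{N,k}(ξ) = λ^{−A(ξ)}/Z_{N,k}`,
extended by `0` outside of the `k`-particle sector. -/
noncomputable def statMeas (N k : ℕ) (p : ℝ) (ξ : Conf N) : ℝ :=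
  if numParticles ξ = k then lam p ^ (-Astat N k ξ) / Zpart N k p else 0

/-- Total variation distance `‖μ − ν‖_TV = sup_A (μ(A) − ν(A))` on a finite space. -/
noncomputable def tvDist {S : Type*} [Fintype S] (μ ν : S → ℝ) : ℝ :=
  ⨆ A : Finset S, (∑ x ∈ A, μ x - ∑ x ∈ A, ν x)

/-- `d^{N,k}(t) = max_{ξ ∈ Ω⁰_{N,k}} ‖P_t(ξ,·) − π_{N,k}‖_TV`. -/
noncomputable def distEq (N k : ℕ) (p t : ℝ) : ℝ :=
  ⨆ ξ : {ξ : Conf N // numParticles ξ = k},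
    tvDist (fun ξ' => Pt N p t ξ.1 ξ') (statMeas N k p)

/-- `T^{N,k}_mix(ε) = inf {t ≥ 0 : d^{N,k}(t) ≤ ε}`. -/
noncomputable def Tmix (N k : ℕ) (p ε : ℝ) : ℝ :=
  sInf {t : ℝ | 0 ≤ t ∧ distEq N k p t ≤ ε}

/-- The height function `h(ξ)(x) = Σ_{y=1}^x (2ξ(y) − 1)`, for `x ∈ {0,…,N}`. -/
def height {N : ℕ} (ξ : Conf N) (x : ℕ) : ℤ :=
  ∑ y ∈ Finset.univ.filter (fun y : Fin N => (y : ℕ) < x), (if ξ y then (1 : ℤ) else -1)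

/-- Pointwise order on height functions. -/
def heightLE {N : ℕ} (ξ ξ' : Conf N) : Prop := ∀ x ≤ N, height ξ x ≤ height ξ' x

/-- `ϱ = (√p − √q)²`. -/
noncomputable def rho (p : ℝ) : ℝ := (Real.sqrt p - Real.sqrt (1 - p)) ^ 2

/-- The spectral gap `gap_N = (√p − √q)² + 4√(pq)·sin²(π/(2N))`. -/
noncomputable def gapN (N : ℕ) (p : ℝ) : ℝ :=
  rho p + 4 * Real.sqrt (p * (1 - p)) * Real.sin (Real.pi / (2 * N)) ^ 2

/-- `a` solves the boundary value problem `√(pq)·Δa(x) = ϱ·a(x)` on `{1,…,N−1}`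
with `a(0) = 1` and `a(N) = λ^{(2k−N)/2}`, defining `a_{N,k}`. -/
def IsBVP (N k : ℕ) (p : ℝ) (a : ℕ → ℝ) : Prop :=
  a 0 = 1 ∧ a N = lam p ^ ((2 * (k : ℝ) - N) / 2) ∧
    ∀ x : ℕ, 1 ≤ x → x ≤ N - 1 →
      Real.sqrt (p * (1 - p)) * (a (x + 1) + a (x - 1) - 2 * a x) = rho p * a x

/-- `f^{(j)}_{N,k}(ζ) = Σ_{x=1}^{N-1} sin(jπx/N)·(λ^{ζ(x)/2} − a_{N,k}(x))/(λ−1)`,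
viewed as a function of the particle configuration via the height function. -/
noncomputable def eigenF (N : ℕ) (p : ℝ) (a : ℕ → ℝ) (j : ℕ) (ξ : Conf N) : ℝ :=
  ∑ x ∈ Finset.Icc 1 (N - 1),
    Real.sin ((j : ℝ) * Real.pi * x / N) *
      ((lam p ^ ((height ξ x : ℝ) / 2) - a x) / (lam p - 1))

/-- `f^{(0)}_{N,k}(ζ) = Σ_{x=1}^{N-1} (λ^{ζ(x)/2} − a_{N,k}(x))/(λ−1)`. -/
noncomputable def fZero (N : ℕ) (p : ℝ) (a : ℕ → ℝ) (ξ : Conf N) : ℝ :=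
  ∑ x ∈ Finset.Icc 1 (N - 1), (lam p ^ ((height ξ x : ℝ) / 2) - a x) / (lam p - 1)

/-- The maximal configuration `ξ^max` (particles on sites `1,…,k`);
its height function is `∧`. -/
def confMax (N k : ℕ) : Conf N := fun x => decide ((x : ℕ) < k)

/-- The minimal configuration `ξ^min` (particles on sites `N−k+1,…,N`);
its height function is `∨`. -/
def confMin (N k : ℕ) : Conf N := fun x => decide (N - k ≤ (x : ℕ))

/-- `π_{N,k}(ξ(x) = 1)` for the (0-based) site `x : Fin N`. -/
noncomputable def occProb (N k : ℕ) (p : ℝ) (x : Fin N) : ℝ :=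
  ∑ ξ ∈ Finset.univ.filter (fun ξ : Conf N => ξ x = true), statMeas N k p ξ

/-- `ℓ_N(ξ) = min {x ∈ {1,…,N} : ξ(x) = 1}`, the position of the leftmost particle. -/
noncomputable def leftPos {N : ℕ} (ξ : Conf N) : ℕ :=
  sInf {x | ∃ y : Fin N, ξ y = true ∧ x = (y : ℕ) + 1}

/-- `r_N(ξ) = max {x ∈ {1,…,N} : ξ(x) = 0}`, the position of the rightmost empty site. -/
noncomputable def rightEmpty {N : ℕ} (ξ : Conf N) : ℕ :=
  sSup {x | ∃ y : Fin N, ξ y = false ∧ x = (y : ℕ) + 1}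

/-- `Q₁(ξ)`: maximal length of a run of consecutive empty sites. -/
noncomputable def runEmpty {N : ℕ} (ξ : Conf N) : ℕ :=
  sSup {n | 1 ≤ n ∧ ∃ i, i + n ≤ N ∧
    ∀ y : Fin N, i ≤ (y : ℕ) → (y : ℕ) < i + n → ξ y = false}

/-- `Q₂(ξ)`: maximal length of a run of consecutive occupied sites. -/
noncomputable def runFull {N : ℕ} (ξ : Conf N) : ℕ :=
  sSup {n | 1 ≤ n ∧ ∃ i, i + n ≤ N ∧
    ∀ y : Fin N, i ≤ (y : ℕ) → (y : ℕ) < i + n → ξ y = true}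

/-- `Q(ξ) = max(Q₁(ξ), Q₂(ξ))`. -/
noncomputable def Qmax {N : ℕ} (ξ : Conf N) : ℕ := max (runEmpty ξ) (runFull ξ)

/-- `L_N(ζ) = max{x : ζ(x) = −x}` for a height function `ζ`. -/
noncomputable def LNh {N : ℕ} (ξ : Conf N) : ℕ :=
  sSup {x | x ≤ N ∧ height ξ x = -(x : ℤ)}

/-- `R_N(ζ) = min{x : ζ(x) = x − 2(N−k)}` for a height function `ζ`. -/
noncomputable def RNh (k : ℕ) {N : ℕ} (ξ : Conf N) : ℕ :=
  sInf {x | x ≤ N ∧ height ξ x = (x : ℤ) - 2 * ((N : ℤ) - k)}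

/-- `D_N(ζ) = max(|L_N(ζ) − (N−k)|, |R_N(ζ) − (N−k)|)`. -/
noncomputable def DNh (k : ℕ) {N : ℕ} (ξ : Conf N) : ℤ :=
  max |(LNh ξ : ℤ) - ((N : ℤ) - k)| |(RNh k ξ : ℤ) - ((N : ℤ) - k)|

/-- `H_ζ(x) = λ^{(N−k)/2}·(λ^{ζ(x)/2} − a_{N,k}(x))/(λ−1)`. -/
noncomputable def Hfun (N k : ℕ) (p : ℝ) (a : ℕ → ℝ) (ξ : Conf N) (x : ℕ) : ℝ :=
  lam p ^ (((N : ℝ) - k) / 2) * ((lam p ^ ((height ξ x : ℝ) / 2) - a x) / (lam p - 1))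

/-- Variance of `f` under the (probability vector) `μ`. -/
noncomputable def varOf {S : Type*} [Fintype S] (μ f : S → ℝ) : ℝ :=
  (∑ x, μ x * f x ^ 2) - (∑ x, μ x * f x) ^ 2

/-- Total variation distance between the pushforwards of `μ` and `ν` by `g`. -/
noncomputable def tvPush {S : Type*} [Fintype S] (μ ν : S → ℝ) (g : S → ℕ) : ℝ :=
  ⨆ A : Set ℕ,
    ((∑ x ∈ Finset.univ.filter (fun x => g x ∈ A), μ x) -
      ∑ x ∈ Finset.univ.filter (fun x => g x ∈ A), ν x)

/-- The scaling limit `ℓ_α(t)` of the (rescaled) position of the leftmost particle. -/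
noncomputable def ellAlpha (α t : ℝ) : ℝ :=
  if t ≤ α then 0
  else if (Real.sqrt α + Real.sqrt (1 - α)) ^ 2 ≤ t then 1 - α
  else (Real.sqrt t - Real.sqrt α) ^ 2

/-- The scaling limit `r_α(t)` of the (rescaled) position of the rightmost empty site. -/
noncomputable def rAlpha (α t : ℝ) : ℝ :=
  if t ≤ 1 - α then 1
  else if (Real.sqrt α + Real.sqrt (1 - α)) ^ 2 ≤ t then 1 - α
  else 1 - (Real.sqrt t - Real.sqrt (1 - α)) ^ 2

end Wasep

/-!
With `u(x) = λ^{ζ(x)/2}`, swapping the sites `x, x+1` changes `ζ` only at `x`, by `±2`. In each of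
the four occupation patterns of the bond, the rate times the resulting change of `u(x)` equals
`√(pq)·Δu(x) − ϱ·u(x)`, because `ϱ = 1 − 2√(pq)` and `√λ = √p/√q`. Summing over the bonds and
subtracting the boundary value problem `√(pq)·Δa = ϱ·a` leaves `√(pq)·ΣΔ(u − a) − ϱ·Σ(u − a)`; as
`u − a` vanishes at `0` and `N`, the Laplacian sum telescopes to the two boundary terms of (a).
For (b), `λ > 1` makes `u` monotone in `ζ`, and the boundary terms enter with the coefficient
`−√(pq)/(λ−1) ≤ 0`.
-/

namespace Wasep

open Finset

noncomputable def lamHeight (p : ℝ) {N : ℕ} (ξ : Conf N) (x : ℕ) : ℝ :=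
  lam p ^ ((height ξ x : ℝ) / 2)

def discLap (g : ℕ → ℝ) (x : ℕ) : ℝ := g (x + 1) + g (x - 1) - 2 * g x

lemma discLap_sub (f g : ℕ → ℝ) (x : ℕ) : discLap (f - g) x = discLap f x - discLap g x := by
  simp only [discLap, Pi.sub_apply]
  ring

lemma sum_Icc_discLap (g : ℕ → ℝ) (n : ℕ) :
    ∑ x ∈ Icc 1 n, discLap g x = g 0 + g (n + 1) - g 1 - g n := by
  induction n with
  | zero => simp
  | succ n ih =>
    rw [sum_Icc_succ_top (by omega), ih]
    simp only [discLap, Nat.add_sub_cancel]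
    ring

lemma sum_fin_add_one_eq_sum_Icc (f : ℕ → ℝ) (n : ℕ) :
    ∑ i : Fin n, f (i + 1) = ∑ x ∈ Icc 1 n, f x := by
  rw [Fin.sum_univ_eq_sum_range (fun i => f (i + 1)), range_eq_Ico, sum_Ico_add',
    zero_add, Ico_add_one_right_eq_Icc]

section Height

variable {N : ℕ} (ξ : Conf N)

lemma height_zero : height ξ 0 = 0 := by
  simp [height]

lemma height_succ {x : ℕ} (hx : x < N) :
    height ξ (x + 1) = height ξ x + if ξ ⟨x, hx⟩ then 1 else -1 := by
  have hfilter : (univ.filter fun y : Fin N => (y : ℕ) < x + 1)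
      = insert ⟨x, hx⟩ (univ.filter fun y : Fin N => (y : ℕ) < x) := by
    ext z
    simp only [mem_filter, mem_univ, true_and, mem_insert, Fin.ext_iff]
    omega
  rw [height, hfilter, sum_insert (by simp), add_comm]
  rfl

lemma height_swapBond_of_ne (y : Fin (N - 1)) {x : ℕ} (hx : x ≠ y.1 + 1) :
    height (swapBond ξ y) x = height ξ x := by
  refine sum_equiv (Equiv.swap (siteA y) (siteB y)) (fun z => ?_) (fun z _ => rfl)
  simp only [mem_filter, mem_univ, true_and]
  rcases eq_or_ne z (siteA y) with rfl | hA
  · rw [Equiv.swap_apply_left]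
    simp only [siteA, siteB]
    omega
  rcases eq_or_ne z (siteB y) with rfl | hB
  · rw [Equiv.swap_apply_right]
    simp only [siteA, siteB]
    omega
  rw [Equiv.swap_apply_of_ne_of_ne hA hB]

lemma height_swapBond_self (y : Fin (N - 1)) :
    height (swapBond ξ y) (y + 1) = height ξ y + if ξ (siteB y) then 1 else -1 := by
  have h := height_succ (swapBond ξ y) (x := y) (siteA y).isLt
  rw [height_swapBond_of_ne ξ y (Nat.lt_succ_self _).ne] at h
  have hswap : swapBond ξ y (siteA y) = ξ (siteB y) := by simp [swapBond]
  rw [h, ← hswap]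
  rfl

lemma height_of_numParticles {k : ℕ} (h : numParticles ξ = k) :
    height ξ N = 2 * k - N := by
  have hsign : ∀ y : Fin N, (if ξ y then (1 : ℤ) else -1) = 2 * (if ξ y then 1 else 0) - 1 := by
    intro y
    cases ξ y <;> simp
  have hcount : ∑ y : Fin N, (if ξ y then (1 : ℤ) else 0) = k := by
    rw [sum_boole, ← h, numParticles]
  rw [height, filter_true_of_mem (fun y _ => y.isLt), sum_congr rfl fun y _ => hsign y,
    sum_sub_distrib, ← mul_sum, hcount]
  simp

end Height

section Lam

variable {p : ℝ}

lemma lam_pos (hp : p ∈ Set.Ioo 0 1) : 0 < lam p :=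
  div_pos hp.1 (sub_pos.2 hp.2)

lemma one_lt_lam (hp : p ∈ Set.Ioo (1 / 2) 1) : 1 < lam p :=
  (one_lt_div (sub_pos.2 hp.2)).2 (by linarith [hp.1])

lemma rho_eq_one_sub (hp : p ∈ Set.Icc 0 1) : rho p = 1 - 2 * √(p * (1 - p)) := by
  rw [rho, Real.sqrt_mul hp.1]
  linear_combination Real.sq_sqrt hp.1 + Real.sq_sqrt (sub_nonneg.2 hp.2)

lemma lamHeight_eq_zpow (hp : 0 ≤ lam p) {N : ℕ} (ξ : Conf N) (x : ℕ) :
    lamHeight p ξ x = √(lam p) ^ height ξ x := by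
  rw [lamHeight, Real.rpow_div_two_eq_sqrt _ hp, Real.rpow_intCast]

lemma lamHeight_le_of_heightLE (hp : p ∈ Set.Ioo (1 / 2) 1) {N : ℕ} {ξ ξ' : Conf N}
    (h : heightLE ξ ξ') {x : ℕ} (hx : x ≤ N) : lamHeight p ξ x ≤ lamHeight p ξ' x := by
  refine Real.rpow_le_rpow_of_exponent_le (one_lt_lam hp).le ?_
  gcongr
  exact_mod_cast h x hx

lemma rate_mul_lamHeight_swapBond_sub (hp : p ∈ Set.Ioo 0 1) {N : ℕ} (ξ : Conf N)
    (y : Fin (N - 1)) :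
    rate p ξ y * (lamHeight p (swapBond ξ y) (y + 1) - lamHeight p ξ (y + 1)) =
      √(p * (1 - p)) * discLap (lamHeight p ξ) (y + 1) - rho p * lamHeight p ξ (y + 1) := by
  obtain ⟨hp0, hp1⟩ := hp
  have hq0 : 0 < 1 - p := sub_pos.2 hp1
  have hA : height ξ (y + 1) = height ξ y + if ξ (siteA y) then 1 else -1 :=
    height_succ ξ (x := y) (siteA y).isLt
  have hB : height ξ (y + 1 + 1) = height ξ (y + 1) + if ξ (siteB y) then 1 else -1 :=
    height_succ ξ (siteB y).isLt
  have hr : √(lam p) = √p / √(1 - p) := Real.sqrt_div hp0.le _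
  have hr0 : √(lam p) ≠ 0 := (Real.sqrt_pos.2 (lam_pos ⟨hp0, hp1⟩)).ne'
  rw [rho_eq_one_sub ⟨hp0.le, hp1.le⟩, Real.sqrt_mul hp0.le]
  simp only [rate, discLap, Nat.add_sub_cancel, lamHeight_eq_zpow (lam_pos ⟨hp0, hp1⟩).le,
    height_swapBond_self, hB, hA, zpow_add₀ hr0]
  rw [hr]
  have hsp : 0 < √p := Real.sqrt_pos.2 hp0
  have hsq : 0 < √(1 - p) := Real.sqrt_pos.2 hq0
  have hsp2 : √p ^ 2 = p := Real.sq_sqrt hp0.le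
  have hsq2 : √(1 - p) ^ 2 = 1 - p := Real.sq_sqrt hq0.le
  set s := (√p / √(1 - p)) ^ height ξ y
  set sp := √p
  set sq := √(1 - p)
  have hsum : sp ^ 2 + sq ^ 2 = 1 := by rw [hsp2, hsq2]; ring
  rw [← hsq2, ← hsp2]
  cases ξ (siteA y) <;> cases ξ (siteB y) <;>
    simp only [Bool.false_eq_true, Bool.true_eq_false, and_false, and_true, and_self,
      ↓reduceIte, add_zero, zero_add, Int.reduceNeg, zpow_neg, zpow_ofNat, pow_one, inv_div,
      sub_self, mul_zero] <;>
    field_simp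
  · linear_combination (-sq * s) * hsum
  · linear_combination (-s) * hsum
  · linear_combination (-s) * hsum
  · linear_combination (-sp * s) * hsum

end Lam

section Generator

variable {N k : ℕ} {p : ℝ}

lemma fZero_swapBond_sub (a : ℕ → ℝ) (ξ : Conf N) (y : Fin (N - 1)) :
    fZero N p a (swapBond ξ y) - fZero N p a ξ =
      (lamHeight p (swapBond ξ y) (y + 1) - lamHeight p ξ (y + 1)) / (lam p - 1) := by
  have hy : (y : ℕ) + 1 ∈ Icc 1 (N - 1) := mem_Icc.2 ⟨by omega, y.isLt⟩
  rw [fZero, fZero, ← sum_sub_distrib, sum_eq_single_of_mem _ hy fun x _ hx => by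
    rw [height_swapBond_of_ne ξ y hx, sub_self]]
  rw [lamHeight, lamHeight]
  ring

lemma gen_fZero_eq_sum (hp : p ∈ Set.Ioo 0 1) (a : ℕ → ℝ) (ξ : Conf N) :
    gen N p (fZero N p a) ξ = ∑ x ∈ Icc 1 (N - 1),
      (√(p * (1 - p)) * discLap (lamHeight p ξ) x - rho p * lamHeight p ξ x) / (lam p - 1) := by
  rw [gen, ← sum_fin_add_one_eq_sum_Icc]
  refine sum_congr rfl fun y _ => ?_
  rw [fZero_swapBond_sub, mul_div_assoc', rate_mul_lamHeight_swapBond_sub hp]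

theorem gen_fZero (hN : 1 ≤ N) (hp : p ∈ Set.Ioo 0 1) {a : ℕ → ℝ} (ha : IsBVP N k p a)
    {ξ : Conf N} (hξ : numParticles ξ = k) :
    gen N p (fZero N p a) ξ = -rho p * fZero N p a ξ - √(p * (1 - p)) / (lam p - 1) *
      (lamHeight p ξ (N - 1) + lamHeight p ξ 1 - a (N - 1) - a 1) := by
  set g := lamHeight p ξ - a
  have hg0 : g 0 = 0 := by simp [g, lamHeight, height_zero, ha.1]
  have hgN : g N = 0 := by
    simp only [g, Pi.sub_apply, lamHeight, height_of_numParticles ξ hξ, ha.2.1, sub_eq_zero]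
    push_cast
    ring_nf
  have hsum_lap : ∑ x ∈ Icc 1 (N - 1), discLap g x = -g 1 - g (N - 1) := by
    rw [sum_Icc_discLap, Nat.sub_add_cancel hN, hg0, hgN]
    ring
  have hgen : gen N p (fZero N p a) ξ = ∑ x ∈ Icc 1 (N - 1),
      (√(p * (1 - p)) * discLap g x - rho p * g x) / (lam p - 1) := by
    rw [gen_fZero_eq_sum hp]
    refine sum_congr rfl fun x hx => ?_
    have hbvp : √(p * (1 - p)) * discLap a x = rho p * a x :=
      ha.2.2 x (mem_Icc.1 hx).1 (mem_Icc.1 hx).2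
    rw [discLap_sub, show g x = lamHeight p ξ x - a x from rfl]
    linear_combination hbvp / (lam p - 1)
  have hf : fZero N p a ξ = (∑ x ∈ Icc 1 (N - 1), g x) / (lam p - 1) := by
    rw [sum_div]
    rfl
  rw [hgen, ← sum_div, sum_sub_distrib, ← mul_sum, ← mul_sum, hsum_lap, hf]
  simp only [g, Pi.sub_apply]
  ring

theorem gen_fZero_sub_le (hN : 1 ≤ N) (hp : p ∈ Set.Ioo (1 / 2) 1) {a : ℕ → ℝ}
    (ha : IsBVP N k p a) {ξ ξ' : Conf N} (hξ : numParticles ξ = k)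
    (hξ' : numParticles ξ' = k) (h : heightLE ξ ξ') :
    gen N p (fZero N p a) ξ' - gen N p (fZero N p a) ξ ≤
      -rho p * (fZero N p a ξ' - fZero N p a ξ) := by
  have hp' : p ∈ Set.Ioo 0 1 := ⟨by linarith [hp.1], hp.2⟩
  rw [gen_fZero hN hp' ha hξ, gen_fZero hN hp' ha hξ']
  have hc : 0 ≤ √(p * (1 - p)) / (lam p - 1) :=
    div_nonneg (Real.sqrt_nonneg _) (sub_nonneg.2 (one_lt_lam hp).le)
  have h1 := lamHeight_le_of_heightLE hp h hN
  have h2 := lamHeight_le_of_heightLE hp h (N.sub_le 1)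
  linarith [mul_nonneg hc (add_nonneg (sub_nonneg.2 h1) (sub_nonneg.2 h2))]

end Generator

theorem generator_on_fZero_general
    (N k : ℕ) (p : ℝ) (hN : 2 ≤ N)
    (hp : p ∈ Set.Ioo (1 / 2 : ℝ) 1)
    (a : ℕ → ℝ) (ha : IsBVP N k p a) :
    (∀ ξ : Conf N, numParticles ξ = k →
      gen N p (fZero N p a) ξ =
        -(rho p) * fZero N p a ξ -
          Real.sqrt (p * (1 - p)) / (lam p - 1) *
            (lam p ^ ((height ξ (N - 1) : ℝ) / 2) + lam p ^ ((height ξ 1 : ℝ) / 2)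
              - a (N - 1) - a 1)) ∧
    (∀ ξ ξ' : Conf N, numParticles ξ = k → numParticles ξ' = k → heightLE ξ ξ' →
      gen N p (fZero N p a) ξ' - gen N p (fZero N p a) ξ ≤
        -(rho p) * (fZero N p a ξ' - fZero N p a ξ)) :=
  ⟨fun _ hξ => gen_fZero (by omega) ⟨by linarith [hp.1], hp.2⟩ ha hξ,
    fun _ _ hξ hξ' h => gen_fZero_sub_le (by omega) hp ha hξ hξ' h⟩

/-- (a) Action of the generator on `f^{(0)}_{N,k}`, and (b) the resulting
contraction inequality for ordered pairs of height functions. -/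
theorem generator_on_fZero
    (N k : ℕ) (p : ℝ) (hN : 2 ≤ N) (hk : 1 ≤ k ∧ k < N)
    (hp : p ∈ Set.Ioo (1 / 2 : ℝ) 1)
    (a : ℕ → ℝ) (ha : IsBVP N k p a) :
    (∀ ξ : Conf N, numParticles ξ = k →
      gen N p (fZero N p a) ξ =
        -(rho p) * fZero N p a ξ -
          Real.sqrt (p * (1 - p)) / (lam p - 1) *
            (lam p ^ ((height ξ (N - 1) : ℝ) / 2) + lam p ^ ((height ξ 1 : ℝ) / 2)
              - a (N - 1) - a 1)) ∧
    (∀ ξ ξ' : Conf N, numParticles ξ = k → numParticles ξ' = k → heightLE ξ ξ' →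
      gen N p (fZero N p a) ξ' - gen N p (fZero N p a) ξ ≤
        -(rho p) * (fZero N p a ξ' - fZero N p a ξ)) :=
  generator_on_fZero_general N k p hN hp a ha

end Wasep
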